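/- arXiv:2105.09838 — 6 statements merged into one kernel-verified Lean document; each statement's English description precedes it below -/
import Mathlib

section
/- Let n ≥ 1, α ∈ (0,1], u > 0, F : [0,1]^n → [0,1], x ∈ [0,1]^n and τ ∈ [0,1]. Then |H(x,τ) − H̃(x,τ)| ≤ u·(1 + 1/α)/2. -/
open MeasureTheory

/-- The CVaR auxiliary function `H(x,τ) = τ - (1/α)·max{τ - F(x), 0}`,
expressed as a function of the value `v = F(x)`. -/
noncomputable def auxH (α : ℝ) (v τ : ℝ) : ℝ :=
  τ - (1 / α) * max (τ - v) 0

/-- The `u`-smoothed CVaR auxiliary function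
`H̃(x,τ) = (1/u)·∫₀ᵘ (τ + ξ - (1/α)·max{τ + ξ - F(x), 0}) dξ`,
expressed as a function of the value `v = F(x)`. -/
noncomputable def smoothAuxH (α u : ℝ) (v τ : ℝ) : ℝ :=
  (1 / u) * ∫ ξ in (0:ℝ)..u, (τ + ξ - (1 / α) * max (τ + ξ - v) 0)

/-!
As a function of `τ`, `H` is Lipschitz with constant `1 + 1/α`, and `H̃(τ)` is the average of `H`
over `[τ, τ + u]`. The gap `|H(τ) - H(τ + ξ)|` is at most `(1 + 1/α) ξ`, whose average over
`ξ ∈ [0, u]` is `(1 + 1/α) u / 2`.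
-/

open NNReal

theorem lipschitzWith_auxH (α v : ℝ) : LipschitzWith (1 + ‖1 / α‖₊) (auxH α v) := by
  refine LipschitzWith.of_dist_le_mul fun τ σ => ?_
  have hmax : |max (τ - v) 0 - max (σ - v) 0| ≤ |τ - σ| := by
    simpa using abs_max_sub_max_le_abs (τ - v) (σ - v) 0
  simp only [Real.dist_eq, auxH, NNReal.coe_add, NNReal.coe_one, coe_nnnorm, Real.norm_eq_abs]
  calc |τ - 1 / α * max (τ - v) 0 - (σ - 1 / α * max (σ - v) 0)|
      = |(τ - σ) - 1 / α * (max (τ - v) 0 - max (σ - v) 0)| := by ring_nf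
    _ ≤ |τ - σ| + |1 / α| * |max (τ - v) 0 - max (σ - v) 0| := by
      rw [← abs_mul]; exact abs_sub _ _
    _ ≤ (1 + |1 / α|) * |τ - σ| := by nlinarith [abs_nonneg (1 / α)]

theorem smoothAuxH_eq_average_auxH (α u v τ : ℝ) :
    smoothAuxH α u v τ = (1 / u) * ∫ ξ in (0:ℝ)..u, auxH α v (τ + ξ) :=
  rfl

theorem abs_sub_intervalAverage_le_of_lipschitzWith {g : ℝ → ℝ} {K : ℝ≥0}
    (hg : LipschitzWith K g) (τ : ℝ) {u : ℝ} (hu : 0 < u) :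
    |g τ - (1 / u) * ∫ ξ in (0:ℝ)..u, g (τ + ξ)| ≤ K * u / 2 := by
  have hcont : Continuous fun ξ => g (τ + ξ) := hg.continuous.comp (continuous_const_add τ)
  have hdiff : g τ - (1 / u) * ∫ ξ in (0:ℝ)..u, g (τ + ξ)
      = (1 / u) * ∫ ξ in (0:ℝ)..u, (g τ - g (τ + ξ)) := by
    rw [intervalIntegral.integral_sub intervalIntegrable_const (hcont.intervalIntegrable _ _),
      intervalIntegral.integral_const, smul_eq_mul]
    field_simp
    ring
  have hbound : ‖∫ ξ in (0:ℝ)..u, (g τ - g (τ + ξ))‖ ≤ ∫ ξ in (0:ℝ)..u, (K : ℝ) * ξ := by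
    refine intervalIntegral.norm_integral_le_of_norm_le hu.le (ae_of_all _ fun ξ hξ => ?_)
      ((continuous_const_mul (K : ℝ)).intervalIntegrable _ _)
    simpa [← Real.dist_eq, abs_of_pos hξ.1] using hg.dist_le_mul τ (τ + ξ)
  rw [intervalIntegral.integral_const_mul, integral_id] at hbound
  rw [hdiff, abs_mul, abs_of_pos (one_div_pos.mpr hu)]
  calc 1 / u * |∫ ξ in (0:ℝ)..u, (g τ - g (τ + ξ))| ≤ 1 / u * (K * ((u ^ 2 - 0 ^ 2) / 2)) :=
        mul_le_mul_of_nonneg_left hbound (by positivity)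
    _ = K * u / 2 := by field_simp; ring

theorem stmt0_general (n : ℕ) (α u : ℝ) (hα : α ∈ Set.Ioc (0:ℝ) 1) (hu : 0 < u)
    (F : EuclideanSpace ℝ (Fin n) → ℝ)
    (x : EuclideanSpace ℝ (Fin n))
    (τ : ℝ) :
    |auxH α (F x) τ - smoothAuxH α u (F x) τ| ≤ u * (1 + 1 / α) / 2 := by
  have hK : ((1 + ‖1 / α‖₊ : ℝ≥0) : ℝ) = 1 + 1 / α := by
    rw [NNReal.coe_add, NNReal.coe_one, coe_nnnorm, Real.norm_of_nonneg (one_div_nonneg.mpr hα.1.le)]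
  rw [smoothAuxH_eq_average_auxH, mul_comm u]
  simpa only [hK] using
    abs_sub_intervalAverage_le_of_lipschitzWith (lipschitzWith_auxH α (F x)) τ hu

theorem stmt0 (n : ℕ) (hn : 1 ≤ n) (α u : ℝ) (hα : α ∈ Set.Ioc (0:ℝ) 1) (hu : 0 < u)
    (F : EuclideanSpace ℝ (Fin n) → ℝ)
    (hF : ∀ x : EuclideanSpace ℝ (Fin n), (∀ i, x i ∈ Set.Icc (0:ℝ) 1) →
      F x ∈ Set.Icc (0:ℝ) 1)
    (x : EuclideanSpace ℝ (Fin n)) (hx : ∀ i, x i ∈ Set.Icc (0:ℝ) 1)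
    (τ : ℝ) (hτ : τ ∈ Set.Icc (0:ℝ) 1) :
    |auxH α (F x) τ - smoothAuxH α u (F x) τ| ≤ u * (1 + 1 / α) / 2 :=
  stmt0_general n α u hα hu F x τ
end

section
/- Let α ∈ (0,1], u > 0, and let F : [0,1]^n → [0,1] be differentiable, L-Lipschitz, β-smooth, with ‖∇F(x)‖ ≤ G for all x ∈ [0,1]^n. Then for every fixed τ ∈ [0,1], the map x ↦ H̃(x,τ) is differentiable on [0,1]^n and its gradient in x is (1/α)·(β + L·G/u)-Lipschitz, i.e. ‖∇ₓH̃(x,τ) − ∇ₓH̃(y,τ)‖ ≤ (1/α)·(β + L·G/u)·‖x − y‖ for all x, y ∈ [0,1]^n. -/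
open MeasureTheory

/-- The unit cube `[0,1]^n` in `ℝⁿ` (with the Euclidean norm). -/
def cube (n : ℕ) : Set (EuclideanSpace ℝ (Fin n)) :=
  {x | ∀ i, x i ∈ Set.Icc (0:ℝ) 1}

/-!
Integrating in `ξ` gives the closed form
`H̃ = τ + u/2 - (P (τ - v + u) - P (τ - v)) / (α u)` with `v = F x` and `P s = max s 0 ^ 2 / 2`,
so `∂H̃/∂v = w (τ - v) / (α u)` where `w s = max (s + u) 0 - max s 0` is the clamp of `s + u`
to `[0, u]`: it is `1`-Lipschitz with values in `[0, u]`.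
Hence `∇ₓH̃ = (w (τ - F x) / (α u)) • ∇F x` is the product of a scalar factor bounded by `1/α` and `L/(α u)`-Lipschitz with a vector field that
is `β`-Lipschitz and bounded by `G`, which is `(β + L G / u)/α`-Lipschitz.
-/

theorem hasDerivAt_max_zero_sq_div_two (a : ℝ) :
    HasDerivAt (fun x : ℝ => max x 0 ^ 2 / 2) (max a 0) a := by
  have hf : Continuous fun x : ℝ => max x 0 ^ 2 / 2 := by fun_prop
  have hg : Continuous fun x : ℝ => max x 0 := by fun_prop
  refine hasDerivAt_of_hasDerivAt_of_ne' (fun y (hy : y ≠ 0) => ?_) hf.continuousAt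
    hg.continuousAt a
  rcases hy.lt_or_gt with hy | hy
  · have h0 : (fun x : ℝ => max x 0 ^ 2 / 2) =ᶠ[nhds y] fun _ => 0 := by
      filter_upwards [eventually_lt_nhds hy] with x hx
      simp [hx.le]
    simpa [max_eq_right hy.le] using (hasDerivAt_const y (0 : ℝ)).congr_of_eventuallyEq h0
  · have hsq : (fun x : ℝ => max x 0 ^ 2 / 2) =ᶠ[nhds y] fun x => x ^ 2 / 2 := by
      filter_upwards [eventually_gt_nhds hy] with x hx
      rw [max_eq_left hx.le]
    have := ((hasDerivAt_pow 2 y).div_const 2).congr_of_eventuallyEq hsq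
    convert this using 1
    rw [max_eq_left hy.le]; ring

theorem smoothAuxH_eq (α τ v : ℝ) {u : ℝ} (hu : u ≠ 0) :
    smoothAuxH α u v τ =
      τ + u / 2 - 1 / α / u * (max (τ - v + u) 0 ^ 2 / 2 - max (τ - v) 0 ^ 2 / 2) := by
  have hint : ∫ ξ in (0:ℝ)..u, (τ + ξ - 1 / α * max (τ + ξ - v) 0)
      = (τ * u + u ^ 2 / 2 - 1 / α * (max (τ - v + u) 0 ^ 2 / 2))
        - (τ * 0 + 0 ^ 2 / 2 - 1 / α * (max (τ - v + 0) 0 ^ 2 / 2)) := by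
    refine intervalIntegral.integral_eq_sub_of_hasDerivAt
      (f := fun ξ => τ * ξ + ξ ^ 2 / 2 - 1 / α * (max (τ - v + ξ) 0 ^ 2 / 2)) (fun ξ _ => ?_)
      (Continuous.intervalIntegrable
        (by fun_prop : Continuous fun ξ : ℝ => τ + ξ - 1 / α * max (τ + ξ - v) 0) _ _)
    have hP := (hasDerivAt_max_zero_sq_div_two (τ - v + ξ)).comp ξ
      ((hasDerivAt_id ξ).const_add (τ - v))
    refine ((((hasDerivAt_id ξ).const_mul τ).add ((hasDerivAt_pow 2 ξ).div_const 2)).sub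
      (hP.const_mul (1 / α))).congr_deriv ?_
    rw [show τ + ξ - v = τ - v + ξ by ring]
    norm_num
  rw [smoothAuxH, hint, add_zero]
  field_simp
  ring

theorem hasDerivAt_smoothAuxH (α τ : ℝ) {u : ℝ} (hu : u ≠ 0) (v : ℝ) :
    HasDerivAt (fun w => smoothAuxH α u w τ)
      (1 / α / u * (max (τ - v + u) 0 - max (τ - v) 0)) v := by
  simp_rw [smoothAuxH_eq α τ _ hu]
  have hs : HasDerivAt (fun w : ℝ => τ - w) (-1) v := by
    simpa using (hasDerivAt_id v).const_sub τ
  have hPu := (hasDerivAt_max_zero_sq_div_two (τ - v + u)).comp v (hs.add_const u)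
  have hP := (hasDerivAt_max_zero_sq_div_two (τ - v)).comp v hs
  exact (((hPu.sub hP).const_mul (1 / α / u)).const_sub (τ + u / 2)).congr_deriv (by ring)

theorem max_add_zero_sub_max_zero_mem_Icc {u : ℝ} (hu : 0 ≤ u) (s : ℝ) :
    max (s + u) 0 - max s 0 ∈ Set.Icc 0 u := by
  rcases le_total s 0 with hs | hs <;> rcases le_total (s + u) 0 with hsu | hsu <;>
    simp only [max_eq_left, max_eq_right, hs, hsu, Set.mem_Icc] <;> constructor <;> linarith

theorem abs_max_add_zero_sub_max_zero_sub_le (u s t : ℝ) :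
    |(max (s + u) 0 - max s 0) - (max (t + u) 0 - max t 0)| ≤ |s - t| := by
  have := le_abs_self (s - t)
  have := neg_abs_le (s - t)
  rw [abs_le]
  simp only [max_def]
  split_ifs <;> constructor <;> linarith

theorem HasDerivAt.comp_hasGradientAt {E : Type*} [NormedAddCommGroup E] [InnerProductSpace ℝ E]
    [CompleteSpace E] {f : ℝ → ℝ} {f' : ℝ} {F : E → ℝ} {g : E} {x : E}
    (hf : HasDerivAt f f' (F x)) (hF : HasGradientAt F g x) :
    HasGradientAt (fun y => f (F y)) (f' • g) x := by
  rw [hasGradientAt_iff_hasFDerivAt, map_smul]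
  exact hf.comp_hasFDerivAt x hF

theorem norm_smul_sub_smul_le_of_le {E : Type*} [SeminormedAddCommGroup E] [NormedSpace ℝ E]
    {a b A B P Q : ℝ} {p q : E} (ha : |a| ≤ A) (hab : |a - b| ≤ B) (hpq : ‖p - q‖ ≤ P)
    (hq : ‖q‖ ≤ Q) : ‖a • p - b • q‖ ≤ A * P + B * Q :=
  calc ‖a • p - b • q‖ = ‖a • (p - q) + (a - b) • q‖ := by congr 1; module
    _ ≤ |a| * ‖p - q‖ + |a - b| * ‖q‖ := by
      simpa only [norm_smul, Real.norm_eq_abs] using norm_add_le (a • (p - q)) ((a - b) • q)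
    _ ≤ A * P + B * Q := by
      gcongr
      · exact (abs_nonneg _).trans ha
      · exact (abs_nonneg _).trans hab

theorem stmt1_general (n : ℕ) (α u L β G : ℝ) (hα : α ∈ Set.Ioc (0:ℝ) 1) (hu : 0 < u)
    (F : EuclideanSpace ℝ (Fin n) → ℝ)
    (hdiff : Differentiable ℝ F)
    (hLip : ∀ x ∈ cube n, ∀ y ∈ cube n, |F x - F y| ≤ L * ‖x - y‖)
    (hβ : ∀ x ∈ cube n, ∀ y ∈ cube n, ‖gradient F x - gradient F y‖ ≤ β * ‖x - y‖)
    (hG : ∀ x ∈ cube n, ‖gradient F x‖ ≤ G)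
    (τ : ℝ) :
    (∀ x ∈ cube n, DifferentiableAt ℝ (fun y => smoothAuxH α u (F y) τ) x) ∧
    (∀ x ∈ cube n, ∀ y ∈ cube n,
      ‖gradient (fun y => smoothAuxH α u (F y) τ) x -
        gradient (fun y => smoothAuxH α u (F y) τ) y‖
        ≤ (1 / α) * (β + L * G / u) * ‖x - y‖) := by
  set c : ℝ := 1 / α / u
  set w : ℝ → ℝ := fun v => max (τ - v + u) 0 - max (τ - v) 0
  have hc : 0 ≤ c := div_nonneg (one_div_nonneg.mpr hα.1.le) hu.le
  have hgrad (x) :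
      HasGradientAt (fun y => smoothAuxH α u (F y) τ) ((c * w (F x)) • gradient F x) x :=
    (hasDerivAt_smoothAuxH α τ hu.ne' (F x)).comp_hasGradientAt (hdiff x).hasGradientAt
  refine ⟨fun x _ => (hgrad x).differentiableAt, fun x hx y hy => ?_⟩
  have hwx : |c * w (F x)| ≤ c * u := by
    obtain ⟨h0, h1⟩ := max_add_zero_sub_max_zero_mem_Icc hu.le (τ - F x)
    rw [abs_of_nonneg (mul_nonneg hc h0)]
    exact mul_le_mul_of_nonneg_left h1 hc
  have hwxy : |c * w (F x) - c * w (F y)| ≤ c * (L * ‖x - y‖) := by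
    rw [← mul_sub, abs_mul, abs_of_nonneg hc]
    refine mul_le_mul_of_nonneg_left ?_ hc
    calc |w (F x) - w (F y)| ≤ |(τ - F x) - (τ - F y)| :=
          abs_max_add_zero_sub_max_zero_sub_le u _ _
      _ = |F x - F y| := by rw [sub_sub_sub_cancel_left, abs_sub_comm]
      _ ≤ L * ‖x - y‖ := hLip x hx y hy
  rw [(hgrad x).gradient, (hgrad y).gradient]
  calc _ ≤ c * u * (β * ‖x - y‖) + c * (L * ‖x - y‖) * G :=
        norm_smul_sub_smul_le_of_le hwx hwxy (hβ x hx y hy) (hG y hy)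
    _ = 1 / α * (β + L * G / u) * ‖x - y‖ := by
      simp only [c]
      field_simp

/-- If `F : [0,1]ⁿ → [0,1]` is differentiable, `L`-Lipschitz, `β`-smooth, with `‖∇F‖ ≤ G`,
then for every fixed `τ ∈ [0,1]`, the map `x ↦ H̃(x,τ)` is differentiable and its gradient
is `(1/α)·(β + L·G/u)`-Lipschitz. -/
theorem stmt1 (n : ℕ) (α u L β G : ℝ) (hα : α ∈ Set.Ioc (0:ℝ) 1) (hu : 0 < u)
    (F : EuclideanSpace ℝ (Fin n) → ℝ)
    (hrange : ∀ x ∈ cube n, F x ∈ Set.Icc (0:ℝ) 1)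
    (hdiff : Differentiable ℝ F)
    (hLip : ∀ x ∈ cube n, ∀ y ∈ cube n, |F x - F y| ≤ L * ‖x - y‖)
    (hβ : ∀ x ∈ cube n, ∀ y ∈ cube n, ‖gradient F x - gradient F y‖ ≤ β * ‖x - y‖)
    (hG : ∀ x ∈ cube n, ‖gradient F x‖ ≤ G)
    (τ : ℝ) (hτ : τ ∈ Set.Icc (0:ℝ) 1) :
    (∀ x ∈ cube n, DifferentiableAt ℝ (fun y => smoothAuxH α u (F y) τ) x) ∧
    (∀ x ∈ cube n, ∀ y ∈ cube n,
      ‖gradient (fun y => smoothAuxH α u (F y) τ) x -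
        gradient (fun y => smoothAuxH α u (F y) τ) y‖
        ≤ (1 / α) * (β + L * G / u) * ‖x - y‖) :=
  stmt1_general n α u L β G hα hu F hdiff hLip hβ hG τ
end

section
/- Let α ∈ (0,1], u > 0, and let F : [0,1]^n → [0,1] be monotone, twice continuously differentiable, and continuous DR-submodular. Then the function x ↦ max_{τ∈[0,1]} H̃(x,τ) is monotone and up-concave on [0,1]^n. -/
open MeasureTheory

/-- `max_{τ ∈ [0,1]} H̃(x,τ)`, as a function of `v = F(x)`. -/
noncomputable def maxSmoothAuxH (α u : ℝ) (v : ℝ) : ℝ :=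
  sSup ((fun τ => smoothAuxH α u v τ) '' Set.Icc (0:ℝ) 1)

/-! `H̃(x, τ)` depends on `x` only through `v = F x`. For fixed `ξ` the integrand is jointly
concave in `(v, τ)` (affine minus a nonnegative multiple of the convex `max (·) 0`) and
nondecreasing in `v`; averaging over `ξ` and maximizing over the convex set `τ ∈ [0,1]` preserve
both properties, so `v ↦ max_τ H̃` is concave and nondecreasing on `ℝ`. DR-submodularity makes
the Hessian of `F` nonpositive on pairs of nonnegative directions, so `F` is concave along every
nonnegative direction in the cube, and a concave nondecreasing function of a concave function is
concave. -/

open Set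

theorem ConcaveOn.comp_of_monotone {𝕜 E : Type*} [Semiring 𝕜] [PartialOrder 𝕜]
    [AddCommMonoid E] [SMul 𝕜 E] [SMul 𝕜 ℝ] {s : Set E} {f : E → ℝ} {g : ℝ → ℝ}
    (hg : ConcaveOn 𝕜 univ g) (hg_mono : Monotone g) (hf : ConcaveOn 𝕜 s f) :
    ConcaveOn 𝕜 s (g ∘ f) :=
  ⟨hf.1, fun _ hx _ hy _ _ ha hb hab =>
    (hg.2 trivial trivial ha hb hab).trans (hg_mono (hf.2 hx hy ha hb hab))⟩

section PartialSupremum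

variable {E β : Type*} {f : E → β → ℝ} {S : Set β}

theorem monotone_sSup_image [Preorder E] (hne : S.Nonempty) (hbdd : ∀ v, BddAbove (f v '' S))
    (hf : ∀ τ ∈ S, Monotone (f · τ)) : Monotone fun v => sSup (f v '' S) := by
  intro v w hvw
  refine csSup_le (hne.image _) ?_
  rintro _ ⟨τ, hτ, rfl⟩
  exact (hf τ hτ hvw).trans (le_csSup (hbdd w) ⟨τ, hτ, rfl⟩)

theorem concaveOn_sSup_image [AddCommGroup E] [Module ℝ E] [AddCommGroup β] [Module ℝ β]
    (hS : Convex ℝ S) (hne : S.Nonempty) (hbdd : ∀ v, BddAbove (f v '' S))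
    (hf : ConcaveOn ℝ (univ ×ˢ S) fun p : E × β => f p.1 p.2) :
    ConcaveOn ℝ univ fun v => sSup (f v '' S) := by
  refine ⟨convex_univ, fun v _ w _ a b ha hb hab => ?_⟩
  simp only [smul_eq_mul]
  rw [← smul_eq_mul, ← smul_eq_mul b, ← Real.sSup_smul_of_nonneg ha,
    ← Real.sSup_smul_of_nonneg hb,
    ← csSup_add ((hne.image _).smul_set) ((hbdd v).smul_of_nonneg ha)
      ((hne.image _).smul_set) ((hbdd w).smul_of_nonneg hb)]
  refine csSup_le ((hne.image _).smul_set.add (hne.image _).smul_set) ?_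
  rintro _ ⟨_, ⟨_, ⟨σ, hσ, rfl⟩, rfl⟩, _, ⟨_, ⟨τ, hτ, rfl⟩, rfl⟩, rfl⟩
  exact (hf.2 (mk_mem_prod trivial hσ) (mk_mem_prod trivial hτ) ha hb hab).trans
    (le_csSup (hbdd _) ⟨a • σ + b • τ, hS hσ hτ ha hb hab, rfl⟩)

end PartialSupremum

section SmoothedCVaR

variable {α u : ℝ}

theorem concaveOn_cvarIntegrand (hα : 0 ≤ α) (ξ : ℝ) :
    ConcaveOn ℝ univ fun p : ℝ × ℝ => p.2 + ξ - (1 / α) * max (p.2 + ξ - p.1) 0 := by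
  refine ⟨convex_univ, fun p _ q _ a b ha hb hab => ?_⟩
  simp only [Prod.fst_add, Prod.snd_add, Prod.smul_fst, Prod.smul_snd, smul_eq_mul]
  have hpos : max (a * p.2 + b * q.2 + ξ - (a * p.1 + b * q.1)) 0 ≤
      a * max (p.2 + ξ - p.1) 0 + b * max (q.2 + ξ - q.1) 0 := by
    refine max_le ?_ (by positivity)
    calc a * p.2 + b * q.2 + ξ - (a * p.1 + b * q.1)
        = a * (p.2 + ξ - p.1) + b * (q.2 + ξ - q.1) := by linear_combination (-ξ) * hab
      _ ≤ _ := by gcongr <;> exact le_max_left _ _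
  have := mul_le_mul_of_nonneg_left hpos (one_div_nonneg.mpr hα)
  linear_combination this + ξ * hab

theorem concaveOn_smoothAuxH (hα : 0 ≤ α) (hu : 0 ≤ u) :
    ConcaveOn ℝ univ fun p : ℝ × ℝ => smoothAuxH α u p.1 p.2 := by
  refine ⟨convex_univ, fun p _ q _ a b ha hb hab => ?_⟩
  have hint : ∀ v τ, IntervalIntegrable
      (fun ξ => τ + ξ - (1 / α) * max (τ + ξ - v) 0) volume 0 u :=
    fun v τ => (by fun_prop : Continuous _).intervalIntegrable _ _
  simp only [smoothAuxH, smul_eq_mul]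
  calc a * (1 / u * ∫ ξ in (0:ℝ)..u, p.2 + ξ - 1 / α * max (p.2 + ξ - p.1) 0) +
        b * (1 / u * ∫ ξ in (0:ℝ)..u, q.2 + ξ - 1 / α * max (q.2 + ξ - q.1) 0)
      = 1 / u * ∫ ξ in (0:ℝ)..u, (a * (p.2 + ξ - 1 / α * max (p.2 + ξ - p.1) 0) +
          b * (q.2 + ξ - 1 / α * max (q.2 + ξ - q.1) 0)) := by
        rw [intervalIntegral.integral_add ((hint _ _).const_mul a) ((hint _ _).const_mul b),
          intervalIntegral.integral_const_mul, intervalIntegral.integral_const_mul]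
        ring
    _ ≤ _ := by
        gcongr
        refine intervalIntegral.integral_mono_on hu ?_ (hint _ _) fun ξ _ => ?_
        · exact ((hint _ _).const_mul a).add ((hint _ _).const_mul b)
        · simpa using (concaveOn_cvarIntegrand hα ξ).2 (mem_univ p) (mem_univ q) ha hb hab

theorem monotone_smoothAuxH_left (hα : 0 ≤ α) (hu : 0 ≤ u) (τ : ℝ) :
    Monotone fun v => smoothAuxH α u v τ := by
  intro v w hvw
  dsimp only [smoothAuxH]
  gcongr ?_ * ?_
  refine intervalIntegral.integral_mono_on hu ((by fun_prop : Continuous _).intervalIntegrable _ _)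
    ((by fun_prop : Continuous _).intervalIntegrable _ _) fun ξ _ => ?_
  gcongr

theorem smoothAuxH_le (hα : 0 ≤ α) (hu : 0 < u) (v τ : ℝ) : smoothAuxH α u v τ ≤ τ + u := by
  have hint : ∫ ξ in (0:ℝ)..u, (τ + ξ - (1 / α) * max (τ + ξ - v) 0) ≤ ∫ _ in (0:ℝ)..u, (τ + u) :=
    intervalIntegral.integral_mono_on hu.le ((by fun_prop : Continuous _).intervalIntegrable _ _)
      intervalIntegrable_const fun ξ hξ => by
        have : 0 ≤ 1 / α * max (τ + ξ - v) 0 := by positivity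
        linarith [hξ.2]
  rw [intervalIntegral.integral_const, smul_eq_mul, sub_zero] at hint
  calc smoothAuxH α u v τ ≤ 1 / u * (u * (τ + u)) := by unfold smoothAuxH; gcongr
    _ = τ + u := by field_simp

theorem bddAbove_smoothAuxH_image (hα : 0 ≤ α) (hu : 0 < u) (v : ℝ) :
    BddAbove ((fun τ => smoothAuxH α u v τ) '' Icc 0 1) :=
  ⟨1 + u, by
    rintro _ ⟨τ, hτ, rfl⟩
    linarith [smoothAuxH_le hα hu v τ, hτ.2]⟩

theorem monotone_maxSmoothAuxH (hα : 0 ≤ α) (hu : 0 < u) : Monotone (maxSmoothAuxH α u) :=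
  monotone_sSup_image (nonempty_Icc.2 zero_le_one) (bddAbove_smoothAuxH_image hα hu)
    fun τ _ => monotone_smoothAuxH_left hα hu.le τ

theorem concaveOn_maxSmoothAuxH (hα : 0 ≤ α) (hu : 0 < u) :
    ConcaveOn ℝ univ (maxSmoothAuxH α u) :=
  concaveOn_sSup_image (convex_Icc 0 1) (nonempty_Icc.2 zero_le_one)
    (bddAbove_smoothAuxH_image hα hu)
    ((concaveOn_smoothAuxH hα hu.le).subset (subset_univ _) (convex_univ.prod (convex_Icc 0 1)))

end SmoothedCVaR

theorem convex_cube (n : ℕ) : Convex ℝ (cube n) := fun x hx y hy a b ha hb hab i => by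
  simpa using convex_Icc (0:ℝ) 1 (hx i) (hy i) ha hb hab

theorem bilinear_apply_nonpos_of_nonneg {ι : Type*} [Fintype ι] [DecidableEq ι]
    (B : EuclideanSpace ℝ ι →L[ℝ] EuclideanSpace ℝ ι →L[ℝ] ℝ)
    (hB : ∀ i j, B (EuclideanSpace.single i 1) (EuclideanSpace.single j 1) ≤ 0)
    {d e : EuclideanSpace ℝ ι} (hd : ∀ i, 0 ≤ d i) (he : ∀ j, 0 ≤ e j) : B d e ≤ 0 := by
  have hsum : ∀ v : EuclideanSpace ℝ ι, ∑ i, v i • EuclideanSpace.single i (1:ℝ) = v := by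
    simpa using (EuclideanSpace.basisFun ι ℝ).sum_repr
  rw [← hsum d, ← hsum e]
  simp only [map_sum, map_smul, FunLike.coe_sum, Finset.sum_apply, FunLike.coe_smul,
    Pi.smul_apply, smul_eq_mul]
  exact Finset.sum_nonpos fun j _ => mul_nonpos_of_nonneg_of_nonpos (he j)
    (Finset.sum_nonpos fun i _ => mul_nonpos_of_nonneg_of_nonpos (hd i) (hB i j))

section Line

variable {E G : Type*} [NormedAddCommGroup E] [NormedSpace ℝ E] [NormedAddCommGroup G]
  [NormedSpace ℝ G]

theorem hasDerivAt_comp_line {g : E → G} {x d : E} {t : ℝ}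
    (hg : DifferentiableAt ℝ g (x + t • d)) :
    HasDerivAt (fun s : ℝ => g (x + s • d)) (fderiv ℝ g (x + t • d) d) t :=
  hg.hasFDerivAt.comp_hasDerivAt t (by simpa using ((hasDerivAt_id t).smul_const d).const_add x)

theorem fderiv_fderiv_apply_const {f : E → G} {y : E}
    (hf : DifferentiableAt ℝ (fderiv ℝ f) y) (v w : E) :
    fderiv ℝ (fun z => fderiv ℝ f z w) y v = fderiv ℝ (fderiv ℝ f) y v w := by
  simp [fderiv_clm_apply hf (differentiableAt_const w)]

end Line

theorem concaveOn_comp_line_of_DRSubmodular {n : ℕ} {F : EuclideanSpace ℝ (Fin n) → ℝ}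
    (hC2 : ContDiff ℝ 2 F)
    (hDR : ∀ x ∈ cube n, ∀ i j : Fin n,
      fderiv ℝ (fun y => fderiv ℝ F y (EuclideanSpace.single j (1:ℝ))) x
        (EuclideanSpace.single i (1:ℝ)) ≤ 0)
    (x : EuclideanSpace ℝ (Fin n)) {d : EuclideanSpace ℝ (Fin n)} (hd : ∀ i, 0 ≤ d i) :
    ConcaveOn ℝ {t : ℝ | x + t • d ∈ cube n} fun t => F (x + t • d) := by
  have hF : Differentiable ℝ F := hC2.differentiable (by norm_num)
  have hF' : Differentiable ℝ (fderiv ℝ F) :=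
    (hC2.fderiv_right (m := 1) (by norm_num)).differentiable (by norm_num)
  have hD1 (t : ℝ) := hasDerivAt_comp_line (x := x) (d := d) (t := t) (hF _)
  have hD2 (t : ℝ) : HasDerivAt (fun s : ℝ => fderiv ℝ F (x + s • d) d)
      (fderiv ℝ (fderiv ℝ F) (x + t • d) d d) t := by
    rw [← fderiv_fderiv_apply_const (hF' _)]
    exact hasDerivAt_comp_line ((hF' _).clm_apply (differentiableAt_const d))
  refine concaveOn_of_hasDerivWithinAt2_nonpos
    (((convex_cube n).translate_preimage_right x).is_linear_preimage
      (IsLinearMap.isLinearMap_smul' d))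
    (fun t _ => (hD1 t).continuousAt.continuousWithinAt) (fun t _ => (hD1 t).hasDerivWithinAt)
    (fun t _ => (hD2 t).hasDerivWithinAt)
    fun t ht => ?_
  have hxt : t ∈ {t : ℝ | x + t • d ∈ cube n} := interior_subset ht
  refine bilinear_apply_nonpos_of_nonneg _ (fun i j => ?_) hd hd
  rw [← fderiv_fderiv_apply_const (hF' _)]
  exact hDR _ hxt i j

theorem stmt4_general (n : ℕ) (α u : ℝ) (hα : α ∈ Set.Ioc (0:ℝ) 1) (hu : 0 < u)
    (F : EuclideanSpace ℝ (Fin n) → ℝ)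
    (hmono : ∀ x ∈ cube n, ∀ y ∈ cube n, (∀ i, x i ≤ y i) → F x ≤ F y)
    (hC2 : ContDiff ℝ 2 F)
    (hDR : ∀ x ∈ cube n, ∀ i j : Fin n,
      fderiv ℝ (fun y => fderiv ℝ F y (EuclideanSpace.single j (1:ℝ))) x
        (EuclideanSpace.single i (1:ℝ)) ≤ 0) :
    (∀ x ∈ cube n, ∀ y ∈ cube n, (∀ i, x i ≤ y i) →
      maxSmoothAuxH α u (F x) ≤ maxSmoothAuxH α u (F y)) ∧
    (∀ x ∈ cube n, ∀ d : EuclideanSpace ℝ (Fin n), (∀ i, 0 ≤ d i) →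
      ConcaveOn ℝ {t : ℝ | x + t • d ∈ cube n}
        (fun t => maxSmoothAuxH α u (F (x + t • d)))) := by
  have hmax_mono := monotone_maxSmoothAuxH hα.1.le hu
  refine ⟨fun x hx y hy hxy => hmax_mono (hmono x hx y hy hxy), fun x _ d hd => ?_⟩
  exact (concaveOn_maxSmoothAuxH hα.1.le hu).comp_of_monotone hmax_mono
    (concaveOn_comp_line_of_DRSubmodular hC2 hDR x hd)

/-- If `F : [0,1]ⁿ → [0,1]` is monotone, twice continuously differentiable and continuous
DR-submodular, then `x ↦ max_{τ∈[0,1]} H̃(x,τ)` is monotone and up-concave on `[0,1]ⁿ`. -/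
theorem stmt4 (n : ℕ) (α u : ℝ) (hα : α ∈ Set.Ioc (0:ℝ) 1) (hu : 0 < u)
    (F : EuclideanSpace ℝ (Fin n) → ℝ)
    (hrange : ∀ x ∈ cube n, F x ∈ Set.Icc (0:ℝ) 1)
    (hmono : ∀ x ∈ cube n, ∀ y ∈ cube n, (∀ i, x i ≤ y i) → F x ≤ F y)
    (hC2 : ContDiff ℝ 2 F)
    (hDR : ∀ x ∈ cube n, ∀ i j : Fin n,
      fderiv ℝ (fun y => fderiv ℝ F y (EuclideanSpace.single j (1:ℝ))) x
        (EuclideanSpace.single i (1:ℝ)) ≤ 0) :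
    (∀ x ∈ cube n, ∀ y ∈ cube n, (∀ i, x i ≤ y i) →
      maxSmoothAuxH α u (F x) ≤ maxSmoothAuxH α u (F y)) ∧
    (∀ x ∈ cube n, ∀ d : EuclideanSpace ℝ (Fin n), (∀ i, 0 ≤ d i) →
      ConcaveOn ℝ {t : ℝ | x + t • d ∈ cube n}
        (fun t => maxSmoothAuxH α u (F (x + t • d)))) :=
  stmt4_general n α u hα hu F hmono hC2 hDR
end

section
/- Let F : [0,1]^n → ℝ be differentiable, monotone, and up-concave. Then for all x, y ∈ [0,1]^n, F(y) − F(x) ≤ ⟨∇F(x), y⟩, where ⟨·,·⟩ is the Euclidean inner product. -/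
/-!
Replace `y` by `z = x ∨ y`, still in the cube. Monotonicity gives `F y ≤ F z`; concavity of
`t ↦ F (x + t • (z - x))` bounds `F z - F x` by the directional derivative `⟪∇F x, z - x⟫`.
Monotonicity also makes `∇F x ≥ 0`, and `z - x ≤ y` componentwise because `x ≥ 0`, so
`⟪∇F x, z - x⟫ ≤ ⟪∇F x, y⟫`.
-/

open scoped RealInnerProductSpace

open Set

section Line

variable {E : Type*} [NormedAddCommGroup E] [NormedSpace ℝ E] {F : E → ℝ} {x d : E}

theorem DifferentiableAt.hasDerivAt_add_smul (hF : DifferentiableAt ℝ F x) (d : E) :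
    HasDerivAt (fun t : ℝ => F (x + t • d)) (fderiv ℝ F x d) 0 := by
  have hline : HasDerivAt (fun t : ℝ => x + t • d) d 0 := by
    simpa using ((hasDerivAt_id (0 : ℝ)).smul_const d).const_add x
  have hF' : HasFDerivAt F (fderiv ℝ F x) (x + (0 : ℝ) • d) := by simpa using hF.hasFDerivAt
  exact hF'.comp_hasDerivAt 0 hline

theorem sub_le_fderiv_of_concaveOn_line {S : Set ℝ} (hF : DifferentiableAt ℝ F x)
    (hconc : ConcaveOn ℝ S (fun t => F (x + t • d))) (h0 : 0 ∈ S) (h1 : 1 ∈ S) :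
    F (x + d) - F x ≤ fderiv ℝ F x d := by
  simpa [slope] using hconc.slope_le_of_hasDerivAt h0 h1 one_pos (hF.hasDerivAt_add_smul d)

theorem fderiv_nonneg_of_monotoneOn_line {S : Set ℝ} (hF : DifferentiableAt ℝ F x)
    (hS : Convex ℝ S) (hS' : S.Nontrivial) (h0 : 0 ∈ S)
    (hmono : MonotoneOn (fun t => F (x + t • d)) S) :
    0 ≤ fderiv ℝ F x d :=
  (hF.hasDerivAt_add_smul d).hasDerivWithinAt.nonneg_of_monotoneOn
    (hS.isPreconnected.preperfect_of_nontrivial hS' 0 h0) hmono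

end Line

theorem EuclideanSpace.inner_le_inner_of_nonneg {ι : Type*} [Fintype ι]
    {a b c : EuclideanSpace ℝ ι} (ha : ∀ i, 0 ≤ a i) (hbc : ∀ i, b i ≤ c i) :
    ⟪a, b⟫ ≤ ⟪a, c⟫ := by
  simp only [PiLp.inner_apply, RCLike.inner_apply, conj_trivial]
  exact Finset.sum_le_sum fun i _ => mul_le_mul_of_nonneg_right (hbc i) (ha i)

section Cube

variable {n : ℕ} {F : EuclideanSpace ℝ (Fin n) → ℝ} {x : EuclideanSpace ℝ (Fin n)}

theorem add_smul_single_mem_cube (hx : x ∈ cube n) (i : Fin n) {t : ℝ}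
    (ht : t ∈ Icc (-x i) (1 - x i)) : x + t • EuclideanSpace.single i (1 : ℝ) ∈ cube n := by
  intro j
  by_cases hji : j = i
  · subst hji
    simp only [PiLp.add_apply, PiLp.smul_apply, PiLp.single_apply, if_pos, smul_eq_mul, mul_one]
    constructor <;> linarith [ht.1, ht.2]
  · simpa [PiLp.single_apply, hji] using hx j

theorem monotoneOn_line_in_cube
    (hmono : ∀ x ∈ cube n, ∀ y ∈ cube n, (∀ i, x i ≤ y i) → F x ≤ F y)
    {d : EuclideanSpace ℝ (Fin n)} (hd : ∀ i, 0 ≤ d i) :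
    MonotoneOn (fun t : ℝ => F (x + t • d)) {t : ℝ | x + t • d ∈ cube n} := by
  intro s hs t ht hst
  refine hmono _ hs _ ht fun i => ?_
  simpa using mul_le_mul_of_nonneg_right hst (hd i)

theorem gradient_apply_nonneg_in_cube
    (hmono : ∀ x ∈ cube n, ∀ y ∈ cube n, (∀ i, x i ≤ y i) → F x ≤ F y)
    (hF : DifferentiableAt ℝ F x) (hx : x ∈ cube n) (i : Fin n) :
    0 ≤ gradient F x i := by
  have hsingle : ∀ j, 0 ≤ EuclideanSpace.single i (1 : ℝ) j := fun j => by
    by_cases hji : j = i <;> simp [PiLp.single_apply, hji]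
  have hlt : -x i < 1 - x i := by linarith
  have h0 : (0 : ℝ) ∈ Icc (-x i) (1 - x i) := ⟨by linarith [(hx i).1], by linarith [(hx i).2]⟩
  have key := fderiv_nonneg_of_monotoneOn_line hF (convex_Icc _ _)
    (nontrivial_of_lt (left_mem_Icc.2 hlt.le) (right_mem_Icc.2 hlt.le) hlt) h0
    ((monotoneOn_line_in_cube hmono hsingle).mono
      fun t ht => add_smul_single_mem_cube hx i ht)
  rwa [← inner_gradient_left, EuclideanSpace.inner_single_right, one_mul] at key

end Cube

/-- If `F : [0,1]ⁿ → ℝ` is differentiable, monotone, and up-concave, then for all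
`x, y ∈ [0,1]ⁿ`, `F(y) - F(x) ≤ ⟨∇F(x), y⟩`. -/
theorem stmt6 (n : ℕ) (F : EuclideanSpace ℝ (Fin n) → ℝ)
    (hdiff : Differentiable ℝ F)
    (hmono : ∀ x ∈ cube n, ∀ y ∈ cube n, (∀ i, x i ≤ y i) → F x ≤ F y)
    (hup : ∀ x ∈ cube n, ∀ d : EuclideanSpace ℝ (Fin n), (∀ i, 0 ≤ d i) →
      ConcaveOn ℝ {t : ℝ | x + t • d ∈ cube n} (fun t => F (x + t • d))) :
    ∀ x ∈ cube n, ∀ y ∈ cube n, F y - F x ≤ ⟪gradient F x, y⟫ := by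
  intro x hx y hy
  set z : EuclideanSpace ℝ (Fin n) := WithLp.toLp 2 (fun i => max (x i) (y i))
  have hz : z ∈ cube n := fun i => ⟨le_max_of_le_left (hx i).1, max_le (hx i).2 (hy i).2⟩
  have hd : ∀ i, 0 ≤ (z - x) i := fun i => by simp [z]
  calc F y - F x ≤ F (x + (z - x)) - F x := by
        rw [add_sub_cancel]
        exact sub_le_sub_right (hmono y hy z hz fun i => le_max_right _ _) _
    _ ≤ fderiv ℝ F x (z - x) :=
        sub_le_fderiv_of_concaveOn_line (hdiff x) (hup x hx _ hd) (by simpa using hx)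
          (by simpa using hz)
    _ = ⟪gradient F x, z - x⟫ := inner_gradient_left.symm
    _ ≤ ⟪gradient F x, y⟫ :=
        EuclideanSpace.inner_le_inner_of_nonneg
          (gradient_apply_nonneg_in_cube hmono (hdiff x) hx) fun i => by
            simp only [z, PiLp.sub_apply, sub_le_iff_le_add]
            exact max_le (by linarith [(hy i).1]) (by linarith [(hx i).1])
end

section
/- (Online gradient descent regret.) Let K ⊆ ℝⁿ be a nonempty compact convex set with Euclidean diameter at most D, and let f_1, …, f_T : K → ℝ be concave differentiable functions with ‖∇f_t(x)‖ ≤ G for all x ∈ K and all t. Fix η > 0, let x_1 ∈ K be arbitrary, and define x_{t+1} = proj_K( x_t + η·∇f_t(x_t) ) for t = 1,…,T−1, where proj_K is the Euclidean projection onto K. Then for every x* ∈ K, Σ_{t=1}^T f_t(x*) − Σ_{t=1}^T f_t(x_t) ≤ η·T·G² + D²/η. -/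
/-!
Concavity gives `f t x* - f t (x t) ≤ ⟪∇f t (x t), x* - x t⟫`, and expanding the square shows that
`2η` times this is `‖x t - x*‖² - ‖x t + η ∇f t (x t) - x*‖² + η² ‖∇f t (x t)‖²`. Projecting onto
the convex set `K` does not move a point away from `x* ∈ K`, so the potential `‖x t - x*‖²`
telescopes and `2η · regret ≤ D² + T η² G²`.
-/

open AffineMap

variable {E : Type*} [NormedAddCommGroup E] [InnerProductSpace ℝ E]

theorem ConcaveOn.sub_le_inner_gradient [CompleteSpace E] {K : Set E} {f : E → ℝ}
    (hf : ConcaveOn ℝ K f) {a b : E} (ha : a ∈ K) (hb : b ∈ K)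
    (hfa : DifferentiableAt ℝ f a) :
    f b - f a ≤ inner ℝ (gradient f a) (b - a) := by
  let ℓ : ℝ →ᵃ[ℝ] E := lineMap a b
  have hderiv : HasDerivAt (f ∘ ℓ) (fderiv ℝ f a (b - a)) 0 := by
    have hfa' : HasFDerivAt f (fderiv ℝ f a) (ℓ 0) := by simpa [ℓ] using hfa.hasFDerivAt
    exact hfa'.comp_hasDerivAt (0 : ℝ) hasDerivAt_lineMap
  have := (hf.comp_affineMap ℓ).slope_le_of_hasDerivAt (x := 0) (y := 1)
    (by simpa [ℓ] using ha) (by simpa [ℓ] using hb) zero_lt_one hderiv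
  simpa [slope, ℓ, inner_gradient_left] using this

theorem Convex.norm_sub_le_of_isMinOn {K : Set E} (hK : Convex ℝ K) {p q z : E}
    (hq : q ∈ K) (hmin : IsMinOn (‖· - p‖) K q) (hz : z ∈ K) :
    ‖q - z‖ ≤ ‖p - z‖ := by
  have hmin' : IsMinOn (fun w => ‖p - w‖) K q := by simpa only [norm_sub_rev p] using hmin
  have hobtuse : inner ℝ (p - q) (z - q) ≤ 0 :=
    (norm_eq_iInf_iff_real_inner_le_zero hK hq).mp (hmin'.iInf_eq hq).symm z hz
  have hsplit := norm_sub_sq_real (p - q) (z - q)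
  rw [sub_sub_sub_cancel_right, norm_sub_rev z q] at hsplit
  nlinarith [norm_nonneg (q - z), norm_nonneg (p - z), sq_nonneg ‖p - q‖]

theorem ConcaveOn.two_mul_sub_le_of_gradient_step [CompleteSpace E] {K : Set E} {f : E → ℝ}
    (hf : ConcaveOn ℝ K f) {x z : E} (hx : x ∈ K) (hz : z ∈ K)
    (hfx : DifferentiableAt ℝ f x) {η : ℝ} (hη : 0 ≤ η) :
    2 * η * (f z - f x) ≤
      ‖x - z‖ ^ 2 - ‖x + η • gradient f x - z‖ ^ 2 + η ^ 2 * ‖gradient f x‖ ^ 2 := by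
  set g := gradient f x
  have hexpand : ‖x + η • g - z‖ ^ 2 = ‖x - z‖ ^ 2 - 2 * η * inner ℝ g (z - x) + η ^ 2 * ‖g‖ ^ 2 := by
    rw [show x + η • g - z = (x - z) + η • g by abel, norm_add_sq_real, real_inner_smul_right,
      norm_smul, Real.norm_of_nonneg hη, real_inner_comm, ← neg_sub z x, inner_neg_right]
    ring
  rw [hexpand]
  nlinarith [hf.sub_le_inner_gradient hx hz hfx]

open Finset in
theorem two_mul_regret_le_of_projected_gradient_ascent [CompleteSpace E]
    {K : Set E} (hK : Convex ℝ K) {D G η : ℝ} (hη : 0 ≤ η)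
    (hKD : ∀ x ∈ K, ∀ y ∈ K, ‖x - y‖ ≤ D) {T : ℕ} {f : ℕ → E → ℝ} {x : ℕ → E}
    (hconc : ∀ t < T, ConcaveOn ℝ K (f t))
    (hdiff : ∀ t < T, DifferentiableAt ℝ (f t) (x t))
    (hG : ∀ t < T, ‖gradient (f t) (x t)‖ ≤ G) (hxK : ∀ t < T, x t ∈ K)
    (hproj : ∀ t, t + 1 < T → IsMinOn (‖· - (x t + η • gradient (f t) (x t))‖) K (x (t + 1)))
    {z : E} (hz : z ∈ K) :
    2 * η * ∑ t ∈ range T, (f t z - f t (x t)) ≤ D ^ 2 + T * (η ^ 2 * G ^ 2) := by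
  -- Cut off after the last round, where no projection step is taken, so that the sum telescopes.
  set φ : ℕ → ℝ := fun t => if t < T then ‖x t - z‖ ^ 2 else 0
  have hstep : ∀ t ∈ range T, 2 * η * (f t z - f t (x t)) ≤ φ t - φ (t + 1) + η ^ 2 * G ^ 2 := by
    intro t ht
    have ht : t < T := mem_range.mp ht
    have hnext : φ (t + 1) ≤ ‖x t + η • gradient (f t) (x t) - z‖ ^ 2 := by
      by_cases hlast : t + 1 < T
      · simp only [φ, if_pos hlast]
        gcongr
        exact hK.norm_sub_le_of_isMinOn (hxK (t + 1) hlast) (hproj t hlast) hz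
      · simp only [φ, if_neg hlast]
        positivity
    have hgrad : ‖gradient (f t) (x t)‖ ^ 2 ≤ G ^ 2 := by
      have := hG t ht
      gcongr
    have := (hconc t ht).two_mul_sub_le_of_gradient_step (hxK t ht) hz (hdiff t ht) hη
    simp only [φ, if_pos ht]
    nlinarith
  have hφ0 : φ 0 ≤ D ^ 2 := by
    by_cases hT : 0 < T
    · simp only [φ, if_pos hT]
      exact pow_le_pow_left₀ (norm_nonneg _) (hKD _ (hxK 0 hT) z hz) 2
    · simp only [φ, if_neg hT]
      positivity
  calc 2 * η * ∑ t ∈ range T, (f t z - f t (x t))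
      ≤ ∑ t ∈ range T, (φ t - φ (t + 1) + η ^ 2 * G ^ 2) := by
        rw [mul_sum]; exact sum_le_sum hstep
    _ = φ 0 - φ T + T * (η ^ 2 * G ^ 2) := by
        rw [sum_add_distrib, sum_range_sub', sum_const, card_range, nsmul_eq_mul]
    _ ≤ D ^ 2 + T * (η ^ 2 * G ^ 2) := by simp [φ, hφ0]

theorem stmt13_general (n T : ℕ) (η D G : ℝ) (hη : 0 < η)
    (K : Set (EuclideanSpace ℝ (Fin n)))
    (hKconvex : Convex ℝ K)
    (hKD : ∀ x ∈ K, ∀ y ∈ K, ‖x - y‖ ≤ D)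
    (f : ℕ → EuclideanSpace ℝ (Fin n) → ℝ)
    (hconc : ∀ t < T, ConcaveOn ℝ K (f t))
    (hdiff : ∀ t < T, Differentiable ℝ (f t))
    (hG : ∀ t < T, ∀ x ∈ K, ‖gradient (f t) x‖ ≤ G)
    (x : ℕ → EuclideanSpace ℝ (Fin n)) (hx0 : x 0 ∈ K)
    (hproj : ∀ t, t + 1 < T →
      x (t + 1) ∈ K ∧
      ∀ y ∈ K, ‖x (t + 1) - (x t + η • gradient (f t) (x t))‖
                 ≤ ‖y - (x t + η • gradient (f t) (x t))‖) :
    ∀ xstar ∈ K,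
      ∑ t ∈ Finset.range T, f t xstar - ∑ t ∈ Finset.range T, f t (x t)
        ≤ η * T * G ^ 2 + D ^ 2 / η := by
  intro xstar hxstar
  have hxK : ∀ t < T, x t ∈ K
    | 0, _ => hx0
    | t + 1, ht => (hproj t ht).1
  have hregret := two_mul_regret_le_of_projected_gradient_ascent hKconvex hη.le hKD hconc
    (fun t ht => (hdiff t ht).differentiableAt) (fun t ht => hG t ht _ (hxK t ht)) hxK
    (fun t ht => (hproj t ht).2) hxstar
  rw [← Finset.sum_sub_distrib]
  have hbound : D ^ 2 + T * (η ^ 2 * G ^ 2) ≤ 2 * η * (η * T * G ^ 2 + D ^ 2 / η) := by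
    have hdouble : 2 * η * (η * T * G ^ 2 + D ^ 2 / η) = 2 * (D ^ 2 + T * (η ^ 2 * G ^ 2)) := by
      field_simp
      ring
    rw [hdouble]
    linarith [show 0 ≤ D ^ 2 + T * (η ^ 2 * G ^ 2) by positivity]
  exact le_of_mul_le_mul_left (hregret.trans hbound) (by positivity)

/-- Online gradient descent (projected gradient ascent for concave rewards) regret bound:
if `K` is nonempty compact convex with diameter at most `D`, the rewards `f_t` are concave
and differentiable with `‖∇f_t‖ ≤ G` on `K`, and `x_{t+1}` is the Euclidean projection of
`x_t + η·∇f_t(x_t)` onto `K` (characterized as the closest point of `K`), then the regret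
is at most `η·T·G² + D²/η`. -/
theorem stmt13 (n T : ℕ) (η D G : ℝ) (hη : 0 < η)
    (K : Set (EuclideanSpace ℝ (Fin n)))
    (hKne : K.Nonempty) (hKcompact : IsCompact K) (hKconvex : Convex ℝ K)
    (hKD : ∀ x ∈ K, ∀ y ∈ K, ‖x - y‖ ≤ D)
    (f : ℕ → EuclideanSpace ℝ (Fin n) → ℝ)
    (hconc : ∀ t < T, ConcaveOn ℝ K (f t))
    (hdiff : ∀ t < T, Differentiable ℝ (f t))
    (hG : ∀ t < T, ∀ x ∈ K, ‖gradient (f t) x‖ ≤ G)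
    (x : ℕ → EuclideanSpace ℝ (Fin n)) (hx0 : x 0 ∈ K)
    (hproj : ∀ t, t + 1 < T →
      x (t + 1) ∈ K ∧
      ∀ y ∈ K, ‖x (t + 1) - (x t + η • gradient (f t) (x t))‖
                 ≤ ‖y - (x t + η • gradient (f t) (x t))‖) :
    ∀ xstar ∈ K,
      ∑ t ∈ Finset.range T, f t xstar - ∑ t ∈ Finset.range T, f t (x t)
        ≤ η * T * G ^ 2 + D ^ 2 / η :=
  stmt13_general n T η D G hη K hKconvex hKD f hconc hdiff hG x hx0 hproj
end

section
/- Let α ∈ (0,1], u > 0, and let F : [0,1]^n → [0,1] be monotone and up-concave. Then: (i) for every fixed τ ∈ ℝ, the map x ↦ H̃(x,τ) is monotone on [0,1]^n; and (ii) for every x ∈ [0,1]^n and every d ∈ ℝⁿ with d ≥ 0 componentwise, the map (t, τ) ↦ H̃(x + t·d, τ) is jointly concave on { t ≥ 0 : x + t·d ∈ [0,1]^n } × ℝ; in particular x ↦ H̃(x,τ) is up-concave for each fixed τ. -/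
open MeasureTheory

lemma cont_integrand (c v τ : ℝ) :
    Continuous (fun ξ : ℝ => τ + ξ - c * max (τ + ξ - v) 0) := by
  fun_prop

lemma Hmono {α : ℝ} (hα : 0 < α) (u : ℝ) (hu : 0 < u) {v v' : ℝ} (h : v ≤ v') (τ : ℝ) :
    smoothAuxH α u v τ ≤ smoothAuxH α u v' τ := by
  unfold smoothAuxH
  have hc : (0:ℝ) ≤ 1/α := by positivity
  apply mul_le_mul_of_nonneg_left _ (by positivity)
  apply intervalIntegral.integral_mono_on hu.le
    ((cont_integrand (1/α) v τ).intervalIntegrable 0 u)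
    ((cont_integrand (1/α) v' τ).intervalIntegrable 0 u)
  intro ξ _
  have hm : max (τ+ξ-v') 0 ≤ max (τ+ξ-v) 0 := max_le_max (by linarith) le_rfl
  nlinarith [mul_le_mul_of_nonneg_left hm hc]

lemma Hconc {α : ℝ} (hα : 0 < α) (u : ℝ) (hu : 0 < u)
    (v₁ τ₁ v₂ τ₂ a b : ℝ) (ha : 0 ≤ a) (hb : 0 ≤ b) (hab : a + b = 1) :
    a * smoothAuxH α u v₁ τ₁ + b * smoothAuxH α u v₂ τ₂ ≤
      smoothAuxH α u (a*v₁+b*v₂) (a*τ₁+b*τ₂) := by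
  unfold smoothAuxH
  have hc : (0:ℝ) ≤ 1/α := by positivity
  set f₁ : ℝ → ℝ := fun ξ => τ₁ + ξ - (1/α) * max (τ₁ + ξ - v₁) 0 with hf₁
  set f₂ : ℝ → ℝ := fun ξ => τ₂ + ξ - (1/α) * max (τ₂ + ξ - v₂) 0 with hf₂
  have hi₁ : IntervalIntegrable f₁ volume 0 u := (cont_integrand _ _ _).intervalIntegrable 0 u
  have hi₂ : IntervalIntegrable f₂ volume 0 u := (cont_integrand _ _ _).intervalIntegrable 0 u
  have key : a * (∫ ξ in (0:ℝ)..u, f₁ ξ) + b * (∫ ξ in (0:ℝ)..u, f₂ ξ) ≤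
      ∫ ξ in (0:ℝ)..u, (a*τ₁+b*τ₂ + ξ - (1/α) * max (a*τ₁+b*τ₂ + ξ - (a*v₁+b*v₂)) 0) := by
    rw [← intervalIntegral.integral_const_mul, ← intervalIntegral.integral_const_mul,
        ← intervalIntegral.integral_add (hi₁.const_mul a) (hi₂.const_mul b)]
    apply intervalIntegral.integral_mono_on hu.le
      ((hi₁.const_mul a).add (hi₂.const_mul b))
      ((cont_integrand _ _ _).intervalIntegrable 0 u)
    intro ξ _
    simp only [hf₁, hf₂]
    have hxi : a*ξ + b*ξ = ξ := by rw [← add_mul, hab, one_mul]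
    have h1 : max (a*τ₁+b*τ₂ + ξ - (a*v₁+b*v₂)) 0 ≤
        a * max (τ₁ + ξ - v₁) 0 + b * max (τ₂ + ξ - v₂) 0 := by
      apply max_le
      · have := add_le_add (mul_le_mul_of_nonneg_left (le_max_left (τ₁ + ξ - v₁) 0) ha)
          (mul_le_mul_of_nonneg_left (le_max_left (τ₂ + ξ - v₂) 0) hb)
        nlinarith [hxi, this]
      · positivity
    nlinarith [mul_le_mul_of_nonneg_left h1 hc, hxi]
  calc a * ((1/u) * ∫ ξ in (0:ℝ)..u, f₁ ξ) + b * ((1/u) * ∫ ξ in (0:ℝ)..u, f₂ ξ)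
      = (1/u) * (a * (∫ ξ in (0:ℝ)..u, f₁ ξ) + b * (∫ ξ in (0:ℝ)..u, f₂ ξ)) := by ring
    _ ≤ _ := mul_le_mul_of_nonneg_left key (by positivity)

lemma convexLine (n : ℕ) (x d : EuclideanSpace ℝ (Fin n)) :
    Convex ℝ {t : ℝ | x + t • d ∈ cube n} := by
  intro t₁ h₁ t₂ h₂ a b ha hb hab
  intro i
  have h1i := h₁ i
  have h2i := h₂ i
  simp only [cube, Set.mem_setOf_eq, Set.mem_Icc, PiLp.add_apply, PiLp.smul_apply,
    smul_eq_mul] at *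
  have hx : a * x i + b * x i = x i := by rw [← add_mul, hab, one_mul]
  constructor <;> nlinarith [hx, mul_nonneg ha h1i.1, mul_nonneg hb h2i.1,
    mul_le_mul_of_nonneg_left h1i.2 ha, mul_le_mul_of_nonneg_left h2i.2 hb]

/-- If `F : [0,1]ⁿ → [0,1]` is monotone and up-concave, then (i) `x ↦ H̃(x,τ)` is monotone;
(ii) `(t,τ) ↦ H̃(x + t·d, τ)` is jointly concave on `{t ≥ 0 : x + t·d ∈ [0,1]ⁿ} × ℝ` for
every `x ∈ [0,1]ⁿ` and `d ≥ 0`; in particular `x ↦ H̃(x,τ)` is up-concave for fixed `τ`. -/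
theorem stmt14 (n : ℕ) (α u : ℝ) (hα : α ∈ Set.Ioc (0:ℝ) 1) (hu : 0 < u)
    (F : EuclideanSpace ℝ (Fin n) → ℝ)
    (hrange : ∀ x ∈ cube n, F x ∈ Set.Icc (0:ℝ) 1)
    (hmono : ∀ x ∈ cube n, ∀ y ∈ cube n, (∀ i, x i ≤ y i) → F x ≤ F y)
    (hup : ∀ x ∈ cube n, ∀ d : EuclideanSpace ℝ (Fin n), (∀ i, 0 ≤ d i) →
      ConcaveOn ℝ {t : ℝ | x + t • d ∈ cube n} (fun t => F (x + t • d))) :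
    (∀ τ : ℝ, ∀ x ∈ cube n, ∀ y ∈ cube n, (∀ i, x i ≤ y i) →
      smoothAuxH α u (F x) τ ≤ smoothAuxH α u (F y) τ) ∧
    (∀ x ∈ cube n, ∀ d : EuclideanSpace ℝ (Fin n), (∀ i, 0 ≤ d i) →
      ConcaveOn ℝ ({t : ℝ | 0 ≤ t ∧ x + t • d ∈ cube n} ×ˢ (Set.univ : Set ℝ))
        (fun p : ℝ × ℝ => smoothAuxH α u (F (x + p.1 • d)) p.2)) ∧
    (∀ τ : ℝ, ∀ x ∈ cube n, ∀ d : EuclideanSpace ℝ (Fin n), (∀ i, 0 ≤ d i) →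
      ConcaveOn ℝ {t : ℝ | x + t • d ∈ cube n}
        (fun t => smoothAuxH α u (F (x + t • d)) τ)) := by
  obtain ⟨hα0, -⟩ := hα
  refine ⟨?_, ?_, ?_⟩
  · intro τ x hx y hy hxy
    exact Hmono hα0 u hu (hmono x hx y hy hxy) τ
  · intro x hx d hd
    constructor
    · have hs : {t : ℝ | 0 ≤ t ∧ x + t • d ∈ cube n}
          = Set.Ici (0:ℝ) ∩ {t : ℝ | x + t • d ∈ cube n} := rfl
      rw [hs]
      exact ((convex_Ici 0).inter (convexLine n x d)).prod convex_univ
    · intro p hp q hq a b ha hb hab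
      obtain ⟨⟨-, hpc⟩, -⟩ := hp
      obtain ⟨⟨-, hqc⟩, -⟩ := hq
      have hF := (hup x hx d hd).2 hpc hqc ha hb hab
      simp only [smul_eq_mul] at hF
      have h1 := Hconc hα0 u hu (F (x + p.1 • d)) p.2 (F (x + q.1 • d)) q.2 a b ha hb hab
      have h2 := Hmono hα0 u hu hF (a * p.2 + b * q.2)
      simp only [Prod.smul_fst, Prod.smul_snd, Prod.fst_add, Prod.snd_add, smul_eq_mul]
      exact h1.trans h2
  · intro τ x hx d hd
    constructor
    · exact convexLine n x d
    · intro s hs t ht a b ha hb hab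
      have hF := (hup x hx d hd).2 hs ht ha hb hab
      simp only [smul_eq_mul] at hF
      have h1 := Hconc hα0 u hu (F (x + s • d)) τ (F (x + t • d)) τ a b ha hb hab
      have hτ : a * τ + b * τ = τ := by rw [← add_mul, hab, one_mul]
      rw [hτ] at h1
      have h2 := Hmono hα0 u hu hF τ
      simp only [smul_eq_mul]
      exact h1.trans h2
end
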